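/- Let A and B be compact self-adjoint operators on Hilbert spaces H and K respectively, and let Q : K → H be a bounded operator with ‖Q‖ ≤ 1. Fix s > 0 and ε ∈ (0, min(s,1)). Suppose ‖(Q Q* − I) A‖ < s ε and ‖A − Q B Q*‖ < ε. Then the number of eigenvalues of B in ((s−ε)/(1+ε), ∞) counted with multiplicity is at least the number of eigenvalues of A in (s, ∞) counted with multiplicity. -/

import Mathlib

open ContinuousLinearMap

variable {H K : Type*} [NormedAddCommGroup H] [InnerProductSpace ℂ H] [CompleteSpace H]
  [NormedAddCommGroup K] [InnerProductSpace ℂ K] [CompleteSpace K]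

/-- The eigenvalue counting function `N_T(s, ∞)`: the number of eigenvalues of `T`
in `(s, ∞)` counted with multiplicity, i.e. the dimension of the sum of the
eigenspaces for eigenvalues `μ > s`. -/
noncomputable def eigCount {E : Type*} [NormedAddCommGroup E] [InnerProductSpace ℂ E]
    (T : E →L[ℂ] E) (s : ℝ) : ℕ :=
  Module.finrank ℂ
    ↥(⨆ μ : {μ : ℝ // s < μ}, Module.End.eigenspace (T : E →ₗ[ℂ] E) ((μ : ℝ) : ℂ))

/-!
Let `V` be the span of the eigenvectors of `A` with eigenvalue `> s` and `W` that of `B` with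
eigenvalue `> t = (s - ε) / (1 + ε)`. Both are finite-dimensional, because a compact operator
cannot be bounded below on an infinite-dimensional subspace.

Every `v ∈ V` is `A w` with `s ‖w‖ ≤ ‖v‖`, so the first hypothesis gives
`‖(QQ* - 1) v‖ ≤ ε ‖v‖`, hence `‖Q* v‖² ≤ (1 + ε) ‖v‖²`; the second gives
`⟪B Q* v, Q* v⟫ > (s - ε) ‖v‖² ≥ t ‖Q* v‖²` for `v ≠ 0`. On the other hand the spectral theorem
for compact self-adjoint operators gives `⟪B u, u⟫ ≤ t ‖u‖²` on `Wᗮ`. So no `Q* v` with `v ≠ 0` lies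
in `Wᗮ`: the orthogonal projection onto `W` composed with `Q*` is injective on `V`, and
`dim V ≤ dim W`.
-/

open Module Module.End RCLike
open scoped InnerProductSpace

section

variable {𝕜 E F : Type*} [RCLike 𝕜] [NormedAddCommGroup E] [InnerProductSpace 𝕜 E]
  [NormedAddCommGroup F] [InnerProductSpace 𝕜 F]

def Module.End.eigenspacesAbove (T : End 𝕜 E) (s : ℝ) : Submodule 𝕜 E :=
  ⨆ μ : {μ : ℝ // s < μ}, eigenspace T (μ : 𝕜)

theorem Module.End.eigenspacesAbove_mem_invtSubmodule (T : End 𝕜 E) (s : ℝ) :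
    eigenspacesAbove T s ∈ T.invtSubmodule := by
  rw [mem_invtSubmodule_iff_map_le, eigenspacesAbove, Submodule.map_iSup]
  exact iSup_mono fun μ ↦ (mem_invtSubmodule_iff_map_le T).mp (eigenspace_mem_invtSubmodule T _)

theorem Module.End.re_inner_apply_self_of_mem_eigenspace {T : End 𝕜 E} {μ : 𝕜} {v : E}
    (hv : v ∈ eigenspace T μ) : re ⟪T v, v⟫_𝕜 = re μ * ‖v‖ ^ 2 := by
  rw [mem_eigenspace_iff.mp hv, inner_smul_left, inner_self_eq_norm_sq_to_K]
  norm_cast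
  simp

theorem OrthogonalFamily.re_inner_le_of_mem_iSup {ι : Type*} {V : ι → Submodule 𝕜 E}
    (hV : OrthogonalFamily 𝕜 (fun i ↦ V i) fun i ↦ (V i).subtypeₗᵢ) {T : End 𝕜 E}
    (hTV : ∀ i, V i ∈ T.invtSubmodule) {t : ℝ}
    (hVt : ∀ i, ∀ v ∈ V i, re ⟪T v, v⟫_𝕜 ≤ t * ‖v‖ ^ 2) {x : E} (hx : x ∈ ⨆ i, V i) :
    re ⟪T x, x⟫_𝕜 ≤ t * ‖x‖ ^ 2 := by
  classical
  obtain ⟨d, hd, rfl⟩ := (Submodule.mem_iSup_iff_exists_finsupp V x).mp hx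
  have inner_sum (S : End 𝕜 E) (hS : ∀ i, ∀ v ∈ V i, S v ∈ V i) :
      ⟪S (d.sum fun _ v ↦ v), d.sum fun _ v ↦ v⟫_𝕜 = ∑ i ∈ d.support, ⟪S (d i), d i⟫_𝕜 := by
    simpa [Finsupp.sum, map_sum] using
      hV.inner_sum (fun i ↦ ⟨S (d i), hS i _ (hd i)⟩) (fun i ↦ ⟨d i, hd i⟩) d.support
  have norm_sum := inner_sum LinearMap.id fun _ _ ↦ id
  simp only [LinearMap.id_apply] at norm_sum
  rw [inner_sum T hTV, ← inner_self_eq_norm_sq (𝕜 := 𝕜), norm_sum, map_sum, map_sum,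
    Finset.mul_sum]
  exact Finset.sum_le_sum fun i _ ↦ by simpa [inner_self_eq_norm_sq] using hVt i _ (hd i)

namespace LinearMap.IsSymmetric

variable {T : End 𝕜 E} (hT : T.IsSymmetric) {s : ℝ}
include hT

theorem mul_norm_sq_le_re_inner_of_mem_eigenspacesAbove {x : E}
    (hx : x ∈ eigenspacesAbove T s) : s * ‖x‖ ^ 2 ≤ re ⟪T x, x⟫_𝕜 := by
  have hV := hT.orthogonalFamily_eigenspaces.comp (f := fun μ : {μ : ℝ // s < μ} ↦ (μ : 𝕜))
    fun _ _ h ↦ Subtype.ext (ofReal_injective h)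
  have := hV.re_inner_le_of_mem_iSup (T := -T) (t := -s)
    (fun μ v hv ↦ neg_mem (mem_eigenspace_iff.mp hv ▸ Submodule.smul_mem _ _ hv)) (fun μ v hv ↦ ?_) hx
  · simpa using this
  rw [LinearMap.neg_apply, inner_neg_left, map_neg, re_inner_apply_self_of_mem_eigenspace hv,
    ofReal_re, neg_mul, neg_le_neg_iff]
  exact mul_le_mul_of_nonneg_right μ.2.le (sq_nonneg _)

theorem mul_norm_le_norm_apply_of_mem_eigenspacesAbove {x : E}
    (hx : x ∈ eigenspacesAbove T s) : s * ‖x‖ ≤ ‖T x‖ := by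
  rcases (norm_nonneg x).eq_or_lt with hx0 | hx0
  · simp [← hx0]
  refine le_of_mul_le_mul_right ?_ hx0
  calc s * ‖x‖ * ‖x‖ = s * ‖x‖ ^ 2 := by ring
    _ ≤ re ⟪T x, x⟫_𝕜 := hT.mul_norm_sq_le_re_inner_of_mem_eigenspacesAbove hx
    _ ≤ ‖T x‖ * ‖x‖ := re_inner_le_norm _ _

theorem exists_apply_eq_of_mem_eigenspacesAbove [FiniteDimensional 𝕜 (eigenspacesAbove T s)]
    (hs : 0 < s) {v : E} (hv : v ∈ eigenspacesAbove T s) :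
    ∃ w, T w = v ∧ s * ‖w‖ ≤ ‖v‖ := by
  have hinj : Set.InjOn T (eigenspacesAbove T s) := by
    intro x hx y hy hxy
    have := hT.mul_norm_le_norm_apply_of_mem_eigenspacesAbove (sub_mem hx hy)
    rw [map_sub, hxy, sub_self, norm_zero] at this
    exact sub_eq_zero.mp (norm_le_zero_iff.mp (nonpos_of_mul_nonpos_right this hs))
  obtain ⟨w, hw, rfl⟩ :=
    (LinearMap.injOn_iff_surjOn (eigenspacesAbove_mem_invtSubmodule T s)).mp hinj hv
  exact ⟨w, rfl, hT.mul_norm_le_norm_apply_of_mem_eigenspacesAbove hw⟩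

end LinearMap.IsSymmetric

/-- A Riesz sequence in a ball of `V` would have an image under `T` with no Cauchy
subsequence. -/
theorem IsCompactOperator.finiteDimensional_of_mul_norm_le {T : E →L[𝕜] F}
    (hT : IsCompactOperator T) {V : Submodule 𝕜 E} {c : ℝ} (hc : 0 < c)
    (hV : ∀ x ∈ V, c * ‖x‖ ≤ ‖T x‖) : FiniteDimensional 𝕜 V := by
  by_contra hfin
  obtain ⟨R, f, -, hfR, hsep⟩ := exists_seq_norm_le_one_le_norm_sub hfin
  have hmem n : T (f n) ∈ closure (T '' Metric.closedBall 0 R) :=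
    subset_closure ⟨f n, by simpa using hfR n, rfl⟩
  obtain ⟨_, -, φ, hφ, hlim⟩ :=
    (hT.isCompact_closure_image_of_bounded Metric.isBounded_closedBall).isSeqCompact hmem
  obtain ⟨N, hN⟩ := Metric.cauchySeq_iff'.mp hlim.cauchySeq c hc
  have hfar : c ≤ ‖T (f (φ (N + 1))) - T (f (φ N))‖ := by
    calc c ≤ c * ‖f (φ (N + 1)) - f (φ N)‖ :=
          le_mul_of_one_le_right hc.le (hsep (hφ.injective.ne (by omega)))
      _ ≤ _ := by simpa using hV _ (f (φ (N + 1)) - f (φ N)).2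
  exact (hfar.trans_lt (by simpa [dist_eq_norm] using hN (N + 1) (by omega))).false

theorem IsCompactOperator.finiteDimensional_eigenspacesAbove {T : E →L[𝕜] E}
    (hT : IsCompactOperator T) (hT' : (T : End 𝕜 E).IsSymmetric) {s : ℝ} (hs : 0 < s) :
    FiniteDimensional 𝕜 (eigenspacesAbove (T : End 𝕜 E) s) :=
  hT.finiteDimensional_of_mul_norm_le hs fun _ ↦ hT'.mul_norm_le_norm_apply_of_mem_eigenspacesAbove

/-- The eigenvectors span a dense subspace, on which the bound holds eigenspace by
eigenspace. -/
theorem IsCompactOperator.re_inner_le_of_forall_hasEigenvalue [CompleteSpace E] {T : E →L[𝕜] E}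
    (hT : IsCompactOperator T) (hT' : (T : End 𝕜 E).IsSymmetric) {t : ℝ}
    (ht : ∀ μ, HasEigenvalue (T : End 𝕜 E) μ → re μ ≤ t) (x : E) :
    re ⟪T x, x⟫_𝕜 ≤ t * ‖x‖ ^ 2 := by
  set S := ⨆ μ, eigenspace (T : End 𝕜 E) μ
  have hspan : ∀ y ∈ S, re ⟪T y, y⟫_𝕜 ≤ t * ‖y‖ ^ 2 :=
    fun y hy ↦ hT'.orthogonalFamily_eigenspaces.re_inner_le_of_mem_iSup
      (fun μ ↦ eigenspace_mem_invtSubmodule _ μ) (fun μ v hv ↦ ?_) hy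
  · have hx : x ∈ closure (S : Set E) := by
      rw [← Submodule.topologicalClosure_coe, Submodule.topologicalClosure_eq_top_iff.mpr
        (orthogonalComplement_iSup_eigenspaces_eq_bot hT hT')]
      trivial
    have hclosed : IsClosed {y : E | re ⟪T y, y⟫_𝕜 ≤ t * ‖y‖ ^ 2} :=
      isClosed_le (by fun_prop) (by fun_prop)
    exact closure_minimal hspan hclosed hx
  rcases eq_or_ne v 0 with rfl | hv0
  · simp
  calc re ⟪T v, v⟫_𝕜 = re μ * ‖v‖ ^ 2 := re_inner_apply_self_of_mem_eigenspace hv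
    _ ≤ t * ‖v‖ ^ 2 := by
      gcongr
      exact ht μ (hasEigenvalue_of_hasEigenvector ⟨hv, hv0⟩)

theorem IsCompactOperator.re_inner_le_of_mem_orthogonal_eigenspacesAbove [CompleteSpace E]
    {T : E →L[𝕜] E} (hT : IsCompactOperator T) (hT' : (T : End 𝕜 E).IsSymmetric) (t : ℝ) :
    ∀ w ∈ (eigenspacesAbove (T : End 𝕜 E) t)ᗮ, re ⟪T w, w⟫_𝕜 ≤ t * ‖w‖ ^ 2 := by
  set W := eigenspacesAbove (T : End 𝕜 E) t
  have hinv : ∀ w ∈ Wᗮ, T w ∈ Wᗮ :=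
    hT'.orthogonalComplement_mem_invtSubmodule (eigenspacesAbove_mem_invtSubmodule _ t)
  let S : Wᗮ →L[𝕜] Wᗮ := T.restrict hinv
  have hS : (S : End 𝕜 Wᗮ).IsSymmetric := hT'.restrict_invariant hinv
  intro w hw
  refine (hT.restrict' hinv : IsCompactOperator S).re_inner_le_of_forall_hasEigenvalue hS
    (fun μ hμ ↦ ?_) ⟨w, hw⟩
  obtain ⟨v, hv, hv0⟩ := hμ.exists_hasEigenvector
  have hμ_real : ((re μ : ℝ) : 𝕜) = μ := conj_eq_iff_re.mp (hS.conj_eigenvalue_eq_self hμ)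
  by_contra! hμt
  have hvW : (v : E) ∈ W := Submodule.mem_iSup_of_mem ⟨re μ, hμt⟩ <| by
    rw [mem_eigenspace_iff, hμ_real]
    exact congrArg Subtype.val (mem_eigenspace_iff.mp hv)
  exact hv0 (Subtype.ext (Submodule.disjoint_def.mp W.orthogonal_disjoint _ hvW v.2))

theorem finrank_le_finrank_of_re_inner_lt {R : E →ₗ[𝕜] F} {T : End 𝕜 F}
    {V : Submodule 𝕜 E} {W : Submodule 𝕜 F} [FiniteDimensional 𝕜 W] {t : ℝ}
    (hW : ∀ u ∈ Wᗮ, re ⟪T u, u⟫_𝕜 ≤ t * ‖u‖ ^ 2)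
    (hV : ∀ v ∈ V, v ≠ 0 → t * ‖R v‖ ^ 2 < re ⟪T (R v), R v⟫_𝕜) :
    finrank 𝕜 V ≤ finrank 𝕜 W := by
  refine LinearMap.finrank_le_finrank_of_injective
    (f := W.orthogonalProjectionOnto.toLinearMap ∘ₗ R ∘ₗ V.subtype) fun v v' hvv' ↦ ?_
  rw [← sub_eq_zero, ← map_sub, LinearMap.comp_apply, coe_coe,
    Submodule.orthogonalProjectionOnto_eq_zero_iff] at hvv'
  by_contra hne
  exact (hW _ hvv').not_gt (hV _ (v - v').2 (by simpa [sub_eq_zero] using hne))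

section Adjoint

variable [CompleteSpace E] [CompleteSpace F] {Q : F →L[𝕜] E} {ε : ℝ} {v : E}

theorem norm_adjoint_apply_sq_le (hQv : ‖(Q ∘L adjoint Q - 1) v‖ ≤ ε * ‖v‖) :
    ‖adjoint Q v‖ ^ 2 ≤ (1 + ε) * ‖v‖ ^ 2 := by
  have hsplit : Q (adjoint Q v) = v + (Q ∘L adjoint Q - 1) v := by simp
  calc ‖adjoint Q v‖ ^ 2 = re ⟪v, Q (adjoint Q v)⟫_𝕜 := by
        rw [← adjoint_inner_left, inner_self_eq_norm_sq]
    _ = ‖v‖ ^ 2 + re ⟪v, (Q ∘L adjoint Q - 1) v⟫_𝕜 := by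
        rw [hsplit, inner_add_right, map_add, inner_self_eq_norm_sq]
    _ ≤ ‖v‖ ^ 2 + ‖v‖ * (ε * ‖v‖) := by
        gcongr
        exact (re_inner_le_norm _ _).trans (by gcongr)
    _ = (1 + ε) * ‖v‖ ^ 2 := by ring

theorem sub_mul_norm_sq_lt_re_inner_adjoint {A : E →L[𝕜] E} {B : F →L[𝕜] F} {s : ℝ}
    (hv : v ≠ 0) (hAv : s * ‖v‖ ^ 2 ≤ re ⟪A v, v⟫_𝕜) (hAB : ‖A - Q ∘L B ∘L adjoint Q‖ < ε) :
    (s - ε) * ‖v‖ ^ 2 < re ⟪B (adjoint Q v), adjoint Q v⟫_𝕜 := by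
  have hsplit : Q (B (adjoint Q v)) = A v - (A - Q ∘L B ∘L adjoint Q) v := by simp
  have hpert : re ⟪(A - Q ∘L B ∘L adjoint Q) v, v⟫_𝕜 < ε * ‖v‖ ^ 2 :=
    calc _ ≤ ‖(A - Q ∘L B ∘L adjoint Q) v‖ * ‖v‖ := re_inner_le_norm _ _
      _ ≤ ‖A - Q ∘L B ∘L adjoint Q‖ * ‖v‖ * ‖v‖ := by gcongr; exact le_opNorm _ _
      _ < ε * ‖v‖ * ‖v‖ := by gcongr
      _ = ε * ‖v‖ ^ 2 := by ring
  rw [adjoint_inner_right, hsplit, inner_sub_left, map_sub]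
  linarith

end Adjoint

end

theorem eigCount_eq_finrank_eigenspacesAbove {G : Type*} [NormedAddCommGroup G]
    [InnerProductSpace ℂ G] (T : G →L[ℂ] G) (s : ℝ) :
    eigCount T s = finrank ℂ (eigenspacesAbove (T : End ℂ G) s) :=
  rfl

theorem eigCount_le_of_norm_perturbation_general
    (A : H →L[ℂ] H) (B : K →L[ℂ] K) (Q : K →L[ℂ] H)
    (hAc : IsCompactOperator (A : H → H)) (hAsa : IsSelfAdjoint A)
    (hBc : IsCompactOperator (B : K → K)) (hBsa : IsSelfAdjoint B)
    (s ε : ℝ) (hs : 0 < s) (hε : ε ∈ Set.Ioo 0 (min s 1))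
    (h1 : ‖(Q ∘L adjoint Q - 1) ∘L A‖ < s * ε)
    (h2 : ‖A - Q ∘L B ∘L adjoint Q‖ < ε) :
    eigCount A s ≤ eigCount B ((s - ε) / (1 + ε)) := by
  obtain ⟨hε0, hεmin⟩ := hε
  have hεs : ε < s := hεmin.trans_le (min_le_left _ _)
  set t := (s - ε) / (1 + ε)
  have ht : 0 < t := div_pos (by linarith) (by linarith)
  rw [eigCount_eq_finrank_eigenspacesAbove, eigCount_eq_finrank_eigenspacesAbove]
  have := hAc.finiteDimensional_eigenspacesAbove hAsa.isSymmetric hs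
  have := hBc.finiteDimensional_eigenspacesAbove hBsa.isSymmetric ht
  refine finrank_le_finrank_of_re_inner_lt (R := (adjoint Q : H →ₗ[ℂ] K))
    (hBc.re_inner_le_of_mem_orthogonal_eigenspacesAbove hBsa.isSymmetric t) fun v hv hv0 ↦ ?_
  obtain ⟨w, hwv, hw⟩ := hAsa.isSymmetric.exists_apply_eq_of_mem_eigenspacesAbove hs hv
  simp only [coe_coe] at hwv hw
  subst hwv
  have hQv : ‖(Q ∘L adjoint Q - 1) (A w)‖ ≤ ε * ‖A w‖ :=
    calc _ ≤ s * ε * ‖w‖ := ((Q ∘L adjoint Q - 1) ∘L A).le_of_opNorm_le h1.le w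
      _ ≤ ε * ‖A w‖ := by nlinarith [norm_nonneg w]
  calc t * ‖adjoint Q (A w)‖ ^ 2 ≤ t * ((1 + ε) * ‖A w‖ ^ 2) := by
        gcongr
        exact norm_adjoint_apply_sq_le hQv
    _ = (s - ε) * ‖A w‖ ^ 2 := by simp only [t]; field_simp
    _ < _ := sub_mul_norm_sq_lt_re_inner_adjoint hv0
        (hAsa.isSymmetric.mul_norm_sq_le_re_inner_of_mem_eigenspacesAbove hv) h2

/-- Let `A`, `B` be compact self-adjoint operators on Hilbert spaces `H`, `K`,
`Q : K → H` bounded with `‖Q‖ ≤ 1`, `s > 0`, `ε ∈ (0, min s 1)`. If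
`‖(QQ* − I)A‖ < sε` and `‖A − QBQ*‖ < ε`, then the number of eigenvalues of `B` in
`((s−ε)/(1+ε), ∞)` is at least the number of eigenvalues of `A` in `(s, ∞)`. -/
theorem eigCount_le_of_norm_perturbation
    (A : H →L[ℂ] H) (B : K →L[ℂ] K) (Q : K →L[ℂ] H)
    (hAc : IsCompactOperator (A : H → H)) (hAsa : IsSelfAdjoint A)
    (hBc : IsCompactOperator (B : K → K)) (hBsa : IsSelfAdjoint B)
    (hQ : ‖Q‖ ≤ 1) (s ε : ℝ) (hs : 0 < s) (hε : ε ∈ Set.Ioo 0 (min s 1))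
    (h1 : ‖(Q ∘L adjoint Q - 1) ∘L A‖ < s * ε)
    (h2 : ‖A - Q ∘L B ∘L adjoint Q‖ < ε) :
    eigCount A s ≤ eigCount B ((s - ε) / (1 + ε)) :=
  eigCount_le_of_norm_perturbation_general A B Q hAc hAsa hBc hBsa s ε hs hε h1 h2
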